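/- Let A > 0 and let x ∈ ℝ with |x| > 1/A. Define the real number k⁺(x) := sign(x)·√(x² − 1/A²) and the 2×2 complex matrix E⁺_A(x) := (1/√2)·s(1/(i·A·k⁺(x)) − 1)·[[xA/(1 − i·A·k⁺(x)), 1],[1, xA/(1 − i·A·k⁺(x))]]. Then: (i) E⁺_A(x) is the boundary value of E_A from the upper half-plane, i.e. E_A(x + iε) → E⁺_A(x) as ε → 0⁺; and (ii) conj(E⁺_A(x)) = i·E⁺_A(x)·σ₁, where conj denotes entrywise complex conjugation. -/

import Mathlib

open Complex Matrix MeasureTheory Filter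

noncomputable def csqrt (z : ℂ) : ℂ := z ^ (1/2 : ℂ)

noncomputable def sB (w : ℂ) : ℂ := Complex.I * csqrt (-w)

def SigmaSet (A : ℝ) : Set ℂ := Complex.ofReal '' (Set.Iic (-(1/A)) ∪ Set.Ici (1/A))

noncomputable def kA (A : ℝ) (l : ℂ) : ℂ := Complex.I * csqrt (1/(A:ℂ)^2 - l^2)

noncomputable def DA (A : ℝ) (l : ℂ) : Matrix (Fin 2) (Fin 2) ℂ :=
  (((Real.sqrt 2 : ℝ) : ℂ)⁻¹ * sB (1/(Complex.I * (A:ℂ) * kA A l) - 1)) •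
    !![l * (A:ℂ) / (1 - Complex.I * (A:ℂ) * kA A l), -1;
       -1, l * (A:ℂ) / (1 - Complex.I * (A:ℂ) * kA A l)]

noncomputable def EA (A : ℝ) (l : ℂ) : Matrix (Fin 2) (Fin 2) ℂ :=
  (((Real.sqrt 2 : ℝ) : ℂ)⁻¹ * sB (1/(Complex.I * (A:ℂ) * kA A l) - 1)) •
    !![l * (A:ℂ) / (1 - Complex.I * (A:ℂ) * kA A l), 1;
       1, l * (A:ℂ) / (1 - Complex.I * (A:ℂ) * kA A l)]

def sigma1 : Matrix (Fin 2) (Fin 2) ℂ := !![0, 1; 1, 0]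
def sigma2 : Matrix (Fin 2) (Fin 2) ℂ := !![0, -Complex.I; Complex.I, 0]
def sigma3 : Matrix (Fin 2) (Fin 2) ℂ := !![1, 0; 0, -1]

/-!
Along `λ = x + iε`, `ε ↓ 0`, the radicand `1/A² - λ²` has imaginary part `-2xε`, which picks
the branch `k_A(λ) = sign(x) · √(λ² - 1/A²)`; this is continuous at `λ = x`, hence
`E_A(x + iε) → E⁺_A(x)`.

With `u = xA` and `t = A k⁺` we have `u² = 1 + t²` and `ut > 0`, and
`E⁺_A(x) = c • [[a, 1], [1, a]]` with `a = u / (1 - it)`. The symmetry reduces to the scalar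
identity `conj c = i c a`, that is `i (1 - it) √(1 - i/t) = u √(1 + i/t)`. Both sides have the
same square and their real parts have the sign of `t`; a complex number is determined by its
square and the sign of its real part.
-/

open ComplexConjugate Topology

lemma csqrt_sq (z : ℂ) : csqrt z ^ 2 = z := by
  simp [csqrt, one_div, cpow_ofNat_inv_pow]

lemma csqrt_re_nonneg (z : ℂ) : 0 ≤ (csqrt z).re := by
  rcases eq_or_ne z 0 with rfl | hz
  · simp [csqrt]
  rw [csqrt, cpow_def_of_ne_zero hz, exp_re]
  have him : (log z * (1 / 2 : ℂ)).im = z.arg / 2 := by simp [log_im, div_eq_mul_inv]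
  rw [him]
  exact mul_nonneg (Real.exp_pos _).le (Real.cos_nonneg_of_mem_Icc
    ⟨by linarith [neg_pi_lt_arg z], by linarith [arg_le_pi z]⟩)

lemma two_mul_re_mul_im_csqrt (z : ℂ) : 2 * (csqrt z).re * (csqrt z).im = z.im := by
  have := congrArg im (csqrt_sq z)
  simp only [pow_two, mul_im] at this
  linarith

lemma csqrt_re_pos {z : ℂ} (hz : z.im ≠ 0) : 0 < (csqrt z).re :=
  (csqrt_re_nonneg z).lt_of_ne fun h => hz <| by rw [← two_mul_re_mul_im_csqrt, ← h]; ring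

lemma eq_of_sq_eq_of_re_mul_pos {a b : ℂ} (h : a ^ 2 = b ^ 2) (hre : 0 < a.re * b.re) :
    a = b := by
  have : (a - b) * (a + b) = 0 := by linear_combination h
  rcases mul_eq_zero.1 this with h | h
  · exact sub_eq_zero.1 h
  · have : a.re = -b.re := by simpa using congrArg re (eq_neg_of_add_eq_zero_left h)
    rw [this] at hre
    nlinarith [sq_nonneg b.re]

lemma conj_csqrt {z : ℂ} (hz : z.im ≠ 0) : conj (csqrt z) = csqrt (conj z) :=
  eq_of_sq_eq_of_re_mul_pos (by rw [← map_pow, csqrt_sq, csqrt_sq]) <| by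
    rw [conj_re]; exact mul_pos (csqrt_re_pos hz) (csqrt_re_pos (by simpa using hz))

lemma I_mul_csqrt_of_im_neg {z : ℂ} (hz : z.im < 0) : I * csqrt z = csqrt (-z) := by
  refine eq_of_sq_eq_of_re_mul_pos (by rw [mul_pow, csqrt_sq, csqrt_sq, I_sq]; ring) ?_
  have h := two_mul_re_mul_im_csqrt z
  have hre := csqrt_re_pos hz.ne
  have hre' := csqrt_re_pos (z := -z) (by simpa using hz.ne)
  simp only [mul_re, I_re, I_im, zero_mul, one_mul, zero_sub]
  nlinarith [mul_pos hre hre']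

lemma I_mul_csqrt_of_im_pos {z : ℂ} (hz : 0 < z.im) : I * csqrt z = -csqrt (-z) := by
  refine eq_of_sq_eq_of_re_mul_pos (by rw [mul_pow, neg_sq, csqrt_sq, csqrt_sq, I_sq]; ring) ?_
  have h := two_mul_re_mul_im_csqrt z
  have hre := csqrt_re_pos hz.ne'
  have hre' := csqrt_re_pos (z := -z) (by simpa using hz.ne')
  simp only [mul_re, I_re, I_im, zero_mul, one_mul, zero_sub, neg_re]
  nlinarith [mul_pos hre hre']

lemma csqrt_ofReal {r : ℝ} (hr : 0 ≤ r) : csqrt r = (Real.sqrt r : ℂ) := by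
  rw [csqrt, Real.sqrt_eq_rpow, ofReal_cpow hr]; norm_num

lemma continuousAt_sB {w : ℂ} (hw : -w ∈ slitPlane) : ContinuousAt sB w :=
  continuousAt_const.mul ((continuousAt_cpow_const hw).comp continuous_neg.continuousAt)

lemma kA_eq_sign_mul_csqrt (A : ℝ) {x ε : ℝ} (hx : x ≠ 0) (hε : 0 < ε) :
    kA A (x + ε * I) = Real.sign x * csqrt ((x + ε * I) ^ 2 - 1 / (A : ℂ) ^ 2) := by
  have him : (1 / (A : ℂ) ^ 2 - (x + ε * I) ^ 2).im = -(2 * x * ε) := by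
    simp [pow_two]; ring
  have hneg : -(1 / (A : ℂ) ^ 2 - (x + ε * I) ^ 2) = (x + ε * I) ^ 2 - 1 / (A : ℂ) ^ 2 := by
    ring
  rw [kA]
  rcases hx.lt_or_gt with hx | hx
  · rw [I_mul_csqrt_of_im_pos (by rw [him]; nlinarith), hneg, Real.sign_of_neg hx]
    push_cast; ring
  · rw [I_mul_csqrt_of_im_neg (by rw [him]; nlinarith), hneg, Real.sign_of_pos hx]
    push_cast; ring

lemma tendsto_kA_nhdsGT (A : ℝ) {x : ℝ} (hx : 1 / A ^ 2 < x ^ 2) :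
    Tendsto (fun ε : ℝ => kA A (x + ε * I)) (𝓝[>] 0)
      (𝓝 (Real.sign x * Real.sqrt (x ^ 2 - 1 / A ^ 2) : ℝ)) := by
  have hx0 : x ≠ 0 := by
    rintro rfl
    linarith [show (0 : ℝ) ≤ 1 / A ^ 2 by positivity, show (0 : ℝ) ^ 2 = 0 by norm_num]
  have hc : 0 < x ^ 2 - 1 / A ^ 2 := by linarith
  have hval :
      ((x : ℂ) + (0 : ℝ) * I) ^ 2 - 1 / (A : ℂ) ^ 2 = ((x ^ 2 - 1 / A ^ 2 : ℝ) : ℂ) := by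
    push_cast; ring
  have hcont : ContinuousAt (fun ε : ℝ => csqrt ((x + ε * I) ^ 2 - 1 / (A : ℂ) ^ 2)) 0 :=
    ContinuousAt.comp (g := fun z : ℂ => z ^ (1 / 2 : ℂ))
      (continuousAt_cpow_const (by rw [hval]; exact ofReal_mem_slitPlane.2 hc)) (by fun_prop)
  have hlim := (hcont.const_mul (Real.sign x : ℂ)).tendsto.mono_left
    (nhdsWithin_le_nhds (s := Set.Ioi 0))
  rw [hval, csqrt_ofReal hc.le, ← ofReal_mul] at hlim
  refine hlim.congr' ?_
  filter_upwards [self_mem_nhdsWithin] with ε hε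
  exact (kA_eq_sign_mul_csqrt A hx0 hε).symm

lemma map_conj_smul_eq_I_smul_mul_sigma1 {c a : ℂ} (h : conj c = I * c * a) :
    (c • !![a, 1; 1, a]).map conj = I • ((c • !![a, 1; 1, a]) * sigma1) := by
  have h' : conj c * conj a = I * c := by
    have := congrArg conj h
    simp only [conj_conj, map_mul, conj_I] at this
    linear_combination (-I) * this + (conj c * conj a) * I_sq
  ext i j
  fin_cases i <;> fin_cases j <;> simp [sigma1] <;>
    first | linear_combination h | linear_combination h'

noncomputable def eMatrix (u t : ℂ) : Matrix (Fin 2) (Fin 2) ℂ :=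
  (((Real.sqrt 2 : ℝ) : ℂ)⁻¹ * sB (1 / (I * t) - 1)) •
    !![u / (1 - I * t), 1; 1, u / (1 - I * t)]

lemma EA_eq_eMatrix (A : ℝ) (l : ℂ) : EA A l = eMatrix (l * A) (A * kA A l) := by
  simp only [EA, eMatrix, mul_assoc]

lemma neg_one_div_I_mul_sub_one {t : ℂ} (ht : t ≠ 0) : -(1 / (I * t) - 1) = 1 + I / t := by
  field_simp
  linear_combination (-1 : ℂ) * I_sq

lemma continuousAt_eMatrix (u : ℂ) {t : ℝ} (ht : t ≠ 0) :
    ContinuousAt (fun p : ℂ × ℂ => eMatrix p.1 p.2) (u, t) := by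
  have hIt : I * (t : ℂ) ≠ 0 := mul_ne_zero I_ne_zero (ofReal_ne_zero.2 ht)
  have hden : 1 - I * (t : ℂ) ≠ 0 := fun h => ht (by simpa using congrArg im h)
  have hsB : ContinuousAt sB (1 / (I * t) - 1) := continuousAt_sB <| by
    rw [neg_one_div_I_mul_sub_one (ofReal_ne_zero.2 ht)]
    exact mem_slitPlane_iff.2 (Or.inr (by simpa [div_im] using ht))
  have hentry : ContinuousAt (fun p : ℂ × ℂ => p.1 / (1 - I * p.2)) (u, t) :=
    continuousAt_fst.div (by fun_prop) hden
  have hcoeff : ContinuousAt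
      (fun p : ℂ × ℂ => ((Real.sqrt 2 : ℝ) : ℂ)⁻¹ * sB (1 / (I * p.2) - 1)) (u, t) :=
    continuousAt_const.mul (ContinuousAt.comp (g := sB) hsB (by fun_prop (disch := exact hIt)))
  have hmatrix : ContinuousAt
      (fun p : ℂ × ℂ => !![p.1 / (1 - I * p.2), 1; 1, p.1 / (1 - I * p.2)]) (u, t) := by
    refine continuousAt_pi.2 fun i => continuousAt_pi.2 fun j => ?_
    fin_cases i <;> fin_cases j <;> simp [hentry, continuousAt_const]
  exact hcoeff.smul hmatrix

lemma I_mul_one_sub_I_mul_csqrt {u t : ℝ} (hu : u ^ 2 = 1 + t ^ 2) (hut : 0 < u * t) :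
    I * (1 - I * t) * csqrt (1 - I / t) = u * csqrt (1 + I / t) := by
  have ht : t ≠ 0 := by rintro rfl; simp at hut
  have htC : (t : ℂ) ≠ 0 := ofReal_ne_zero.2 ht
  refine eq_of_sq_eq_of_re_mul_pos ?_ ?_
  · simp only [mul_pow, csqrt_sq]
    rw [show (u : ℂ) ^ 2 = 1 + (t : ℂ) ^ 2 by exact_mod_cast hu]
    field_simp
    linear_combination ((1 - I * t) ^ 2 * (t - I) - t ^ 2 * (t - I) - 2 * t) * I_sq
  · have him1 : (1 - I / t).im = -t⁻¹ := by simp [div_im]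
    have him2 : (1 + I / t).im = t⁻¹ := by simp [div_im]
    have h1 := two_mul_re_mul_im_csqrt (1 - I / t)
    have hr1 := csqrt_re_pos (z := 1 - I / t) (by simpa [him1] using ht)
    have hr2 := csqrt_re_pos (z := 1 + I / t) (by simpa [him2] using ht)
    rw [him1] at h1
    set r := (csqrt (1 - I / t)).re
    set m := (csqrt (1 - I / t)).im
    have hm : 2 * r * m * t = -1 := by rw [h1]; field_simp
    have htX : 0 < t * (t * r - m) :=
      pos_of_mul_pos_right (a := 2 * r) (by nlinarith [sq_nonneg (t * r)]) (by positivity)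
    have huX : 0 < u * (t * r - m) :=
      pos_of_mul_pos_right (a := t ^ 2) (by nlinarith [mul_pos hut htX]) (sq_nonneg t)
    have hre : (I * (1 - I * t) * csqrt (1 - I / t)).re = t * r - m := by simp [r, m]
    rw [hre, re_ofReal_mul]
    nlinarith [mul_pos huX hr2]

lemma conj_eMatrix_coeff {u t : ℝ} (hu : u ^ 2 = 1 + t ^ 2) (hut : 0 < u * t) :
    conj (((Real.sqrt 2 : ℝ) : ℂ)⁻¹ * sB (1 / (I * t) - 1)) =
      I * (((Real.sqrt 2 : ℝ) : ℂ)⁻¹ * sB (1 / (I * t) - 1)) * (u / (1 - I * t)) := by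
  have ht : t ≠ 0 := by rintro rfl; simp at hut
  have hden : 1 - I * (t : ℂ) ≠ 0 := fun h => ht (by simpa using congrArg im h)
  have hconj : conj (1 + I / (t : ℂ)) = 1 - I / t := by simp [map_div₀, sub_eq_add_neg, neg_div]
  rw [sB, neg_one_div_I_mul_sub_one (ofReal_ne_zero.2 ht), map_mul, map_mul, map_inv₀,
    conj_ofReal, conj_I, conj_csqrt (by simpa [div_im] using ht), hconj]
  field_simp
  linear_combination I * I_mul_one_sub_I_mul_csqrt hu hut - (1 - I * t) * csqrt (1 - I / t) * I_sq

lemma conj_eMatrix {u t : ℝ} (hu : u ^ 2 = 1 + t ^ 2) (hut : 0 < u * t) :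
    (eMatrix u t).map conj = I • (eMatrix u t * sigma1) :=
  map_conj_smul_eq_I_smul_mul_sigma1 (conj_eMatrix_coeff hu hut)

/-- boundary values of E_A on the upper side of the branch cut, and
the symmetry conj(E⁺_A(x)) = i·E⁺_A(x)·σ₁. -/
theorem stmt_9 (A : ℝ) (hA : 0 < A) (x : ℝ) (hx : 1/A < |x|)
    (kplus : ℝ) (hk : kplus = Real.sign x * Real.sqrt (x^2 - 1/A^2))
    (Eplus : Matrix (Fin 2) (Fin 2) ℂ)
    (hE : Eplus = (((Real.sqrt 2 : ℝ) : ℂ)⁻¹ *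
        sB (1/(Complex.I * (A:ℂ) * (kplus:ℂ)) - 1)) •
      !![(x:ℂ) * (A:ℂ) / (1 - Complex.I * (A:ℂ) * (kplus:ℂ)), 1;
         1, (x:ℂ) * (A:ℂ) / (1 - Complex.I * (A:ℂ) * (kplus:ℂ))]) :
    Filter.Tendsto (fun ε : ℝ => EA A ((x:ℂ) + (ε:ℂ) * Complex.I))
      (nhdsWithin 0 (Set.Ioi 0)) (nhds Eplus) ∧
    Eplus.map (starRingEnd ℂ) = Complex.I • (Eplus * sigma1) := by
  have hx2 : 1 / A ^ 2 < x ^ 2 := by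
    simpa [div_pow, sq_abs] using pow_lt_pow_left₀ hx (by positivity) two_ne_zero
  have hx0 : x ≠ 0 := by rintro rfl; nlinarith [show (0 : ℝ) < 1 / A ^ 2 by positivity]
  have hsign : Real.sign x ^ 2 = 1 := by
    rcases Real.sign_apply_eq_of_ne_zero x hx0 with h | h <;> rw [h] <;> norm_num
  have hksq : kplus ^ 2 = x ^ 2 - 1 / A ^ 2 := by
    rw [hk, mul_pow, hsign, one_mul, Real.sq_sqrt (by linarith)]
  have hxk : 0 < x * kplus := by
    rw [hk, ← mul_assoc, mul_comm x]
    exact mul_pos (Real.sign_mul_pos_of_ne_zero x hx0) (Real.sqrt_pos.2 (by linarith))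
  have hu : (x * A) ^ 2 = 1 + (A * kplus) ^ 2 := by
    rw [mul_pow, mul_pow, hksq]; field_simp; ring
  have hut : 0 < x * A * (A * kplus) := by nlinarith [mul_pos (mul_pos hA hA) hxk]
  have hEsym : Eplus = eMatrix (x * A : ℝ) (A * kplus : ℝ) := by
    rw [hE, eMatrix]; push_cast; simp only [mul_assoc]
  rw [hEsym]
  refine ⟨?_, conj_eMatrix hu hut⟩
  have hl : Tendsto (fun ε : ℝ => (x : ℂ) + ε * I) (𝓝[>] 0) (𝓝 x) := by
    have hcont : Continuous fun ε : ℝ => (x : ℂ) + ε * I := by fun_prop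
    simpa using (hcont.continuousWithinAt (s := Set.Ioi 0) (x := 0)).tendsto
  have hkA := (tendsto_kA_nhdsGT A hx2).const_mul (A : ℂ)
  rw [← hk, ← ofReal_mul] at hkA
  have ht : A * kplus ≠ 0 := mul_ne_zero hA.ne' (by rintro rfl; simp at hxk)
  have hlim := (continuousAt_eMatrix _ ht).tendsto.comp ((hl.mul_const (A : ℂ)).prodMk_nhds hkA)
  simpa [EA_eq_eMatrix, Function.comp_def] using hlim
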